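/- Sharpness of the parity bound in a tripartite example: Let B := X ⊗ Y ⊗ X + X ⊗ Y ⊗ Z + Z ⊗ Z ⊗ Z. Then ‖B‖² = 5; moreover, for this configuration (n = 3, m = 3) the defect weights satisfy φ^{(3)}_{12} = φ^{(3)}_{13} = 0 and φ^{(3)}_{23} = 2, so that ‖B‖² = 5 = m + ∑_{1 ≤ i < j ≤ 3} φ^{(3)}_{ij}, i.e. the bound of Proposition 2.1 holds with equality. -/

import Mathlib

open scoped BigOperators ComplexOrder

namespace Parity

variable {n : ℕ} {d : Fin n → ℕ}

/-- Kronecker product of `n` matrices, as a matrix over the product index set. -/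
def kron (a : ∀ r : Fin n, Matrix (Fin (d r)) (Fin (d r)) ℂ) :
    Matrix (∀ r, Fin (d r)) (∀ r, Fin (d r)) ℂ :=
  fun i j => ∏ r, a r (i r) (j r)

/-- The ℓ²-operator norm of a complex matrix. -/
noncomputable def opNorm {I : Type*} [Fintype I] [DecidableEq I] (A : Matrix I I ℂ) : ℝ :=
  ‖Matrix.toEuclideanCLM (𝕜 := ℂ) A‖

/-- The defect weight φ⁽ⁿ⁾ᵢⱼ. -/
noncomputable def phi {m : ℕ} (a : ∀ r : Fin n, Fin m → Matrix (Fin (d r)) (Fin (d r)) ℂ)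
    (i j : Fin m) : ℝ :=
  (2 : ℝ) ^ ((1 : ℤ) - n) *
    ∑ S ∈ Finset.univ.filter (fun S : Finset (Fin n) => Even S.card),
      (∏ r ∈ S, opNorm (a r i * a r j - a r j * a r i)) *
        (∏ r ∈ Sᶜ, opNorm (a r i * a r j + a r j * a r i))

/-- A state: positive semidefinite with trace one. -/
def IsState {I : Type*} [Fintype I] (ρ : Matrix I I ℂ) : Prop :=
  ρ.PosSemidef ∧ ρ.trace = 1

/-- The trace norm `Tr √(AᴴA)`. -/
noncomputable def traceNorm {I : Type*} [Fintype I] [DecidableEq I] (A : Matrix I I ℂ) : ℝ :=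
  (Matrix.trace
    ((Matrix.posSemidef_conjTranspose_mul_self A).1.eigenvectorUnitary.1 *
      Matrix.diagonal (((↑) : ℝ → ℂ) ∘ Real.sqrt ∘ (Matrix.posSemidef_conjTranspose_mul_self A).1.eigenvalues) *
      (star (Matrix.posSemidef_conjTranspose_mul_self A).1.eigenvectorUnitary : Matrix I I ℂ))).re

/-- Logarithm of a Hermitian matrix via the functional calculus (junk value otherwise);
an eigenvalue `0` contributes `Real.log 0 = 0`. -/
noncomputable def mlog {I : Type*} [Fintype I] [DecidableEq I] (A : Matrix I I ℂ) :
    Matrix I I ℂ :=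
  if hA : A.IsHermitian then
    (hA.eigenvectorUnitary : Matrix I I ℂ) *
      Matrix.diagonal (fun i => (Real.log (hA.eigenvalues i) : ℂ)) *
      (star hA.eigenvectorUnitary : Matrix I I ℂ)
  else 0

/-- Quantum relative entropy `D(ρ‖σ) = Tr(ρ (log ρ − log σ))` (natural logarithm). -/
noncomputable def relEntropy {I : Type*} [Fintype I] [DecidableEq I] (ρ σ : Matrix I I ℂ) : ℝ :=
  (Matrix.trace (ρ * (mlog ρ - mlog σ))).re

/-- The `r`-th marginal (partial trace over all other factors). -/
noncomputable def marginal (ρ : Matrix (∀ r, Fin (d r)) (∀ r, Fin (d r)) ℂ) (r : Fin n) :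
    Matrix (Fin (d r)) (Fin (d r)) ℂ :=
  fun a b => ∑ k : ∀ s, Fin (d s), if k r = a then ρ k (Function.update k r b) else 0

/-- Total correlation `I_tot(ρ) = D(ρ‖ρ₁ ⊗ ⋯ ⊗ ρₙ)`. -/
noncomputable def Itot (ρ : Matrix (∀ r, Fin (d r)) (∀ r, Fin (d r)) ℂ) : ℝ :=
  relEntropy ρ (kron (fun r => marginal ρ r))

/-- The set of product states. -/
def ProdStates (d : Fin n → ℕ) : Set (Matrix (∀ r, Fin (d r)) (∀ r, Fin (d r)) ℂ) :=
  {σ | ∃ s : ∀ r : Fin n, Matrix (Fin (d r)) (Fin (d r)) ℂ,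
    (∀ r, IsState (s r)) ∧ σ = kron s}

/-- The product threshold `Γ_prod(B)`. -/
noncomputable def Gamma (d : Fin n → ℕ) (B : Matrix (∀ r, Fin (d r)) (∀ r, Fin (d r)) ℂ) : ℝ :=
  sSup {x : ℝ | ∃ σ ∈ ProdStates d, x = (Matrix.trace (σ * B)).re}

/-- The excess `Δ_B(ρ)`. -/
noncomputable def excess (d : Fin n → ℕ) (B ρ : Matrix (∀ r, Fin (d r)) (∀ r, Fin (d r)) ℂ) : ℝ :=
  max ((Matrix.trace (ρ * B)).re - Gamma d B) 0

end Parity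

namespace PauliSharp

def X : Matrix (Fin 2) (Fin 2) ℂ := !![0, 1; 1, 0]
def Y : Matrix (Fin 2) (Fin 2) ℂ := !![0, -Complex.I; Complex.I, 0]
def Z : Matrix (Fin 2) (Fin 2) ℂ := !![1, 0; 0, -1]

/-- The local families: site `r` carries the three observables `a r 0, a r 1, a r 2`. -/
def a : Fin 3 → Fin 3 → Matrix (Fin 2) (Fin 2) ℂ :=
  ![![X, X, Z], ![Y, Y, Z], ![X, Z, Z]]

end PauliSharp

/-!
Since `B` is Hermitian, `‖B‖² = ‖B * B‖`. Expanding `B * B` with the Pauli relations, the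
cross terms of `X⊗Y⊗X` with the other two terms cancel (its factors anticommute with theirs at an
odd number of sites), which leaves `B * B = 3 + 2 C` with `C = XZ ⊗ YZ ⊗ 1` unitary. Hence
`‖B * B‖ ≤ 5`, and the product vector `(1, i) ⊗ (1, 1) ⊗ (1, 0)`, fixed by `C`, gives equality.
For the defect weights, at every site the two observables either coincide (commutator `0`,
anticommutator of norm `2`) or anticommute with a unitary product (commutator of norm `2`,
anticommutator `0`), so each of the four terms of `φ⁽³⁾ᵢⱼ` is `0` or `8`.
-/

lemma IsSelfAdjoint.mem_unitary_of_mul_self {R : Type*} [Monoid R] [StarMul R] {x : R}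
    (hx : IsSelfAdjoint x) (h : x * x = 1) : x ∈ unitary R := by
  rw [Unitary.mem_iff, hx.star_eq]
  exact ⟨h, h⟩

namespace Parity

open Matrix

section OpNorm

variable {I : Type*} [Fintype I] [DecidableEq I]

lemma opNorm_smul (c : ℂ) (A : Matrix I I ℂ) : opNorm (c • A) = ‖c‖ * opNorm A := by
  rw [opNorm, opNorm, map_smul, norm_smul]

lemma opNorm_add_le (A B : Matrix I I ℂ) : opNorm (A + B) ≤ opNorm A + opNorm B := by
  rw [opNorm, opNorm, opNorm, map_add]
  exact norm_add_le _ _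

lemma opNorm_of_mem_unitary [Nonempty I] {U : Matrix I I ℂ} (hU : U ∈ unitary (Matrix I I ℂ)) :
    opNorm U = 1 :=
  CStarRing.norm_of_mem_unitary (Unitary.map_mem _ hU)

lemma IsSelfAdjoint.opNorm_sq {A : Matrix I I ℂ} (hA : IsSelfAdjoint A) :
    opNorm A ^ 2 = opNorm (A * A) := by
  rw [opNorm, opNorm, map_mul, (hA.map (toEuclideanCLM (𝕜 := ℂ))).norm_mul_self]

lemma norm_le_opNorm_of_mulVec_eq_smul {A : Matrix I I ℂ} {v : I → ℂ} {c : ℂ} (hv : v ≠ 0)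
    (h : A *ᵥ v = c • v) : ‖c‖ ≤ opNorm A := by
  have hpos : 0 < ‖WithLp.toLp 2 v‖ := norm_pos_iff.2 (by simpa using hv)
  have hle := (toEuclideanCLM (𝕜 := ℂ) A).le_opNorm (WithLp.toLp 2 v)
  rw [toEuclideanCLM_toLp, h, WithLp.toLp_smul, norm_smul] at hle
  exact le_of_mul_le_mul_right hle hpos

lemma opNorm_mul_self_sub_mul_self (M : Matrix I I ℂ) : opNorm (M * M - M * M) = 0 := by
  simp [opNorm]

lemma opNorm_mul_self_add_mul_self [Nonempty I] {M : Matrix I I ℂ} (hM : M * M = 1) :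
    opNorm (M * M + M * M) = 2 := by
  rw [hM, ← two_smul ℂ, opNorm_smul, opNorm_of_mem_unitary (one_mem _)]
  norm_num

lemma opNorm_commutator_of_anticommute [Nonempty I] {M N : Matrix I I ℂ}
    (hMN : N * M = -(M * N)) (hU : M * N ∈ unitary (Matrix I I ℂ)) :
    opNorm (M * N - N * M) = 2 := by
  rw [hMN, sub_neg_eq_add, ← two_smul ℂ, opNorm_smul, opNorm_of_mem_unitary hU]
  norm_num

lemma opNorm_anticommutator_of_anticommute {M N : Matrix I I ℂ} (hMN : N * M = -(M * N)) :
    opNorm (M * N + N * M) = 0 := by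
  simp [hMN, opNorm]

end OpNorm

section Kron

variable {n : ℕ} {d : Fin n → ℕ}

lemma kron_mul (a b : ∀ r : Fin n, Matrix (Fin (d r)) (Fin (d r)) ℂ) :
    kron a * kron b = kron (fun r => a r * b r) := by
  ext i j
  simp only [kron, mul_apply, ← Finset.prod_mul_distrib]
  exact (Fintype.prod_sum fun r (y : Fin (d r)) => a r (i r) y * b r y (j r)).symm

lemma kron_conjTranspose (a : ∀ r : Fin n, Matrix (Fin (d r)) (Fin (d r)) ℂ) :
    (kron a)ᴴ = kron (fun r => (a r)ᴴ) := by
  ext i j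
  simp [kron, conjTranspose_apply]

lemma kron_one : kron (fun r : Fin n => (1 : Matrix (Fin (d r)) (Fin (d r)) ℂ)) = 1 := by
  ext i j
  by_cases h : i = j
  · subst h
    simp [kron]
  · obtain ⟨r, hr⟩ : ∃ r, i r ≠ j r := Function.ne_iff.1 h
    rw [one_apply_ne h]
    exact Finset.prod_eq_zero (Finset.mem_univ r) (one_apply_ne hr)

lemma isSelfAdjoint_kron {a : ∀ r : Fin n, Matrix (Fin (d r)) (Fin (d r)) ℂ}
    (ha : ∀ r, IsSelfAdjoint (a r)) : IsSelfAdjoint (kron a) := by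
  simp only [isSelfAdjoint_iff, star_eq_conjTranspose, kron_conjTranspose] at ha ⊢
  simp only [ha]

lemma kron_mem_unitary {a : ∀ r : Fin n, Matrix (Fin (d r)) (Fin (d r)) ℂ}
    (ha : ∀ r, a r ∈ unitary _) : kron a ∈ unitary _ := by
  simp only [Unitary.mem_iff, star_eq_conjTranspose, kron_conjTranspose, kron_mul] at ha ⊢
  simp only [ha, kron_one, and_self]

lemma kron_mulVec_prod_of_mulVec_eq_smul {a : ∀ r : Fin n, Matrix (Fin (d r)) (Fin (d r)) ℂ}
    {w : ∀ r, Fin (d r) → ℂ} {c : Fin n → ℂ} (h : ∀ r, a r *ᵥ w r = c r • w r) :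
    kron a *ᵥ (fun k => ∏ r, w r (k r)) = (∏ r, c r) • fun k => ∏ r, w r (k r) := by
  funext i
  have hr : ∀ r, ∑ y, a r (i r) y * w r y = c r * w r (i r) := fun r => congrFun (h r) (i r)
  simp only [mulVec, dotProduct, kron, ← Finset.prod_mul_distrib, Pi.smul_apply, smul_eq_mul]
  rw [← Fintype.prod_sum fun r (y : Fin (d r)) => a r (i r) y * w r y]
  simp only [hr, Finset.prod_mul_distrib]

end Kron

lemma phi_three {d : Fin 3 → ℕ} {m : ℕ}
    (a : ∀ r : Fin 3, Fin m → Matrix (Fin (d r)) (Fin (d r)) ℂ) (i j : Fin m) (c s : Fin 3 → ℝ)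
    (hc : ∀ r, opNorm (a r i * a r j - a r j * a r i) = c r)
    (hs : ∀ r, opNorm (a r i * a r j + a r j * a r i) = s r) :
    phi a i j = 4⁻¹ * (s 0 * s 1 * s 2 + c 0 * c 1 * s 2 + c 0 * c 2 * s 1 + c 1 * c 2 * s 0) := by
  have hEven : Finset.univ.filter (fun S : Finset (Fin 3) => Even S.card) =
      {∅, {0, 1}, {0, 2}, {1, 2}} := by decide
  rw [phi, hEven, Finset.sum_insert (by decide), Finset.sum_insert (by decide),
    Finset.sum_insert (by decide), Finset.sum_singleton, Finset.compl_empty,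
    show ({0, 1} : Finset (Fin 3))ᶜ = {2} by decide, show ({0, 2} : Finset (Fin 3))ᶜ = {1} by decide,
    show ({1, 2} : Finset (Fin 3))ᶜ = {0} by decide]
  simp only [Finset.prod_empty, Fin.prod_univ_three, Finset.prod_pair (by decide : (0 : Fin 3) ≠ 1),
    Finset.prod_pair (by decide : (0 : Fin 3) ≠ 2), Finset.prod_pair (by decide : (1 : Fin 3) ≠ 2),
    Finset.prod_singleton, hc, hs]
  norm_num
  ring

end Parity

namespace PauliSharp

open Parity Matrix

lemma isSelfAdjoint_X : IsSelfAdjoint X := by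
  ext i j; fin_cases i <;> fin_cases j <;> simp [X]

lemma isSelfAdjoint_Y : IsSelfAdjoint Y := by
  ext i j; fin_cases i <;> fin_cases j <;> simp [Y]

lemma isSelfAdjoint_Z : IsSelfAdjoint Z := by
  ext i j; fin_cases i <;> fin_cases j <;> simp [Z]

lemma X_mul_X : X * X = 1 := by
  ext i j; fin_cases i <;> fin_cases j <;> simp [X, mul_apply, one_apply]

lemma Y_mul_Y : Y * Y = 1 := by
  ext i j; fin_cases i <;> fin_cases j <;> simp [Y, mul_apply, one_apply]

lemma Z_mul_Z : Z * Z = 1 := by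
  ext i j; fin_cases i <;> fin_cases j <;> simp [Z, mul_apply, one_apply]

lemma Z_mul_X : Z * X = -(X * Z) := by
  ext i j; fin_cases i <;> fin_cases j <;> simp [X, Z, mul_apply]

lemma Z_mul_Y : Z * Y = -(Y * Z) := by
  ext i j; fin_cases i <;> fin_cases j <;> simp [Y, Z, mul_apply]

lemma X_mul_Z_mem_unitary : X * Z ∈ unitary (Matrix (Fin 2) (Fin 2) ℂ) :=
  mul_mem (isSelfAdjoint_X.mem_unitary_of_mul_self X_mul_X)
    (isSelfAdjoint_Z.mem_unitary_of_mul_self Z_mul_Z)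

lemma Y_mul_Z_mem_unitary : Y * Z ∈ unitary (Matrix (Fin 2) (Fin 2) ℂ) :=
  mul_mem (isSelfAdjoint_Y.mem_unitary_of_mul_self Y_mul_Y)
    (isSelfAdjoint_Z.mem_unitary_of_mul_self Z_mul_Z)

def kron₃ (M N P : Matrix (Fin 2) (Fin 2) ℂ) :
    Matrix (Fin 3 → Fin 2) (Fin 3 → Fin 2) ℂ :=
  kron (d := fun _ => 2) ![M, N, P]

lemma kron₃_apply (M N P : Matrix (Fin 2) (Fin 2) ℂ) (i j : Fin 3 → Fin 2) :
    kron₃ M N P i j = M (i 0) (j 0) * N (i 1) (j 1) * P (i 2) (j 2) := by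
  rw [kron₃, kron, Fin.prod_univ_three]
  rfl

lemma kron₃_mul (M N P M' N' P' : Matrix (Fin 2) (Fin 2) ℂ) :
    kron₃ M N P * kron₃ M' N' P' = kron₃ (M * M') (N * N') (P * P') := by
  rw [kron₃, kron₃, kron₃, kron_mul]
  congr 1
  funext r
  fin_cases r <;> rfl

lemma kron₃_one : kron₃ 1 1 1 = 1 := by
  rw [kron₃, ← kron_one]
  congr 1
  funext r
  fin_cases r <;> rfl

lemma kron₃_neg_left (M N P : Matrix (Fin 2) (Fin 2) ℂ) : kron₃ (-M) N P = -kron₃ M N P := by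
  ext i j; simp [kron₃_apply]

lemma kron₃_neg_mid (M N P : Matrix (Fin 2) (Fin 2) ℂ) : kron₃ M (-N) P = -kron₃ M N P := by
  ext i j; simp [kron₃_apply]

lemma kron₃_neg_right (M N P : Matrix (Fin 2) (Fin 2) ℂ) : kron₃ M N (-P) = -kron₃ M N P := by
  ext i j; simp [kron₃_apply]

lemma isSelfAdjoint_kron₃ {M N P : Matrix (Fin 2) (Fin 2) ℂ} (hM : IsSelfAdjoint M)
    (hN : IsSelfAdjoint N) (hP : IsSelfAdjoint P) : IsSelfAdjoint (kron₃ M N P) :=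
  isSelfAdjoint_kron fun r => by fin_cases r <;> assumption

lemma kron₃_mem_unitary {M N P : Matrix (Fin 2) (Fin 2) ℂ} (hM : M ∈ unitary _)
    (hN : N ∈ unitary _) (hP : P ∈ unitary _) : kron₃ M N P ∈ unitary _ :=
  kron_mem_unitary fun r => by fin_cases r <;> assumption

lemma sum_kron_a :
    ∑ i : Fin 3, kron (d := fun _ => 2) (fun r => a r i) =
      kron₃ X Y X + kron₃ X Y Z + kron₃ Z Z Z := by
  simp only [Fin.sum_univ_three, kron₃]
  congr <;> funext r <;> fin_cases r <;> rfl

lemma kron₃_sum_mul_self :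
    (kron₃ X Y X + kron₃ X Y Z + kron₃ Z Z Z) * (kron₃ X Y X + kron₃ X Y Z + kron₃ Z Z Z) =
      (3 : ℂ) • 1 + (2 : ℂ) • kron₃ (X * Z) (Y * Z) 1 := by
  simp only [add_mul, mul_add, kron₃_mul, X_mul_X, Y_mul_Y, Z_mul_Z, Z_mul_X, Z_mul_Y,
    kron₃_neg_left, kron₃_neg_mid, kron₃_neg_right, kron₃_one, neg_neg]
  module

lemma X_mul_Z_mulVec : (X * Z) *ᵥ ![1, Complex.I] = (-Complex.I) • ![1, Complex.I] := by
  ext i; fin_cases i <;> simp [X, Z, mulVec, dotProduct]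

lemma Y_mul_Z_mulVec : (Y * Z) *ᵥ ![1, 1] = Complex.I • ![1, 1] := by
  ext i; fin_cases i <;> simp [Y, Z, mulVec, dotProduct]

def ψ : (Fin 3 → Fin 2) → ℂ := fun k => ∏ r, ![![1, Complex.I], ![1, 1], ![1, 0]] r (k r)

lemma ψ_ne_zero : ψ ≠ 0 := fun h => by
  simpa [ψ, Fin.prod_univ_three] using congrFun h 0

lemma kron₃_mulVec_ψ : kron₃ (X * Z) (Y * Z) 1 *ᵥ ψ = ψ := by
  unfold ψ
  rw [kron₃, kron_mulVec_prod_of_mulVec_eq_smul (c := ![-Complex.I, Complex.I, 1])]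
  · simp [Fin.prod_univ_three]
  · intro r
    fin_cases r
    exacts [X_mul_Z_mulVec, Y_mul_Z_mulVec, by simp]

lemma opNorm_kron₃_sum_sq : opNorm (kron₃ X Y X + kron₃ X Y Z + kron₃ Z Z Z) ^ 2 = 5 := by
  have hB : IsSelfAdjoint (kron₃ X Y X + kron₃ X Y Z + kron₃ Z Z Z) :=
    ((isSelfAdjoint_kron₃ isSelfAdjoint_X isSelfAdjoint_Y isSelfAdjoint_X).add
      (isSelfAdjoint_kron₃ isSelfAdjoint_X isSelfAdjoint_Y isSelfAdjoint_Z)).add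
      (isSelfAdjoint_kron₃ isSelfAdjoint_Z isSelfAdjoint_Z isSelfAdjoint_Z)
  have hC : kron₃ (X * Z) (Y * Z) 1 ∈ unitary _ :=
    kron₃_mem_unitary X_mul_Z_mem_unitary Y_mul_Z_mem_unitary (one_mem _)
  rw [hB.opNorm_sq, kron₃_sum_mul_self]
  apply le_antisymm
  · calc _ ≤ opNorm ((3 : ℂ) • 1 : Matrix (Fin 3 → Fin 2) (Fin 3 → Fin 2) ℂ) +
          opNorm ((2 : ℂ) • kron₃ (X * Z) (Y * Z) 1) := opNorm_add_le _ _
      _ = 5 := by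
        rw [opNorm_smul, opNorm_smul, opNorm_of_mem_unitary (one_mem _), opNorm_of_mem_unitary hC]
        norm_num
  · have hψ : ((3 : ℂ) • 1 + (2 : ℂ) • kron₃ (X * Z) (Y * Z) 1) *ᵥ ψ = (5 : ℂ) • ψ := by
      rw [add_mulVec, smul_mulVec, smul_mulVec, one_mulVec, kron₃_mulVec_ψ]
      module
    simpa using norm_le_opNorm_of_mulVec_eq_smul ψ_ne_zero hψ

lemma phi_a_zero_one : phi (d := fun _ => 2) a 0 1 = 0 := by
  rw [phi_three a 0 1 ![0, 0, 2] ![2, 2, 0]]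
  · simp
  · intro r
    fin_cases r
    exacts [opNorm_mul_self_sub_mul_self X, opNorm_mul_self_sub_mul_self Y,
      opNorm_commutator_of_anticommute Z_mul_X X_mul_Z_mem_unitary]
  · intro r
    fin_cases r
    exacts [opNorm_mul_self_add_mul_self X_mul_X, opNorm_mul_self_add_mul_self Y_mul_Y,
      opNorm_anticommutator_of_anticommute Z_mul_X]

lemma phi_a_zero_two : phi (d := fun _ => 2) a 0 2 = 0 := by
  rw [phi_three a 0 2 ![2, 2, 2] 0]
  · simp
  · intro r
    fin_cases r
    exacts [opNorm_commutator_of_anticommute Z_mul_X X_mul_Z_mem_unitary,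
      opNorm_commutator_of_anticommute Z_mul_Y Y_mul_Z_mem_unitary,
      opNorm_commutator_of_anticommute Z_mul_X X_mul_Z_mem_unitary]
  · intro r
    fin_cases r
    exacts [opNorm_anticommutator_of_anticommute Z_mul_X,
      opNorm_anticommutator_of_anticommute Z_mul_Y, opNorm_anticommutator_of_anticommute Z_mul_X]

lemma phi_a_one_two : phi (d := fun _ => 2) a 1 2 = 2 := by
  rw [phi_three a 1 2 ![2, 2, 0] ![0, 0, 2]]
  · norm_num [Matrix.cons_val_two, Matrix.tail_cons, Matrix.head_cons]
  · intro r
    fin_cases r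
    exacts [opNorm_commutator_of_anticommute Z_mul_X X_mul_Z_mem_unitary,
      opNorm_commutator_of_anticommute Z_mul_Y Y_mul_Z_mem_unitary, opNorm_mul_self_sub_mul_self Z]
  · intro r
    fin_cases r
    exacts [opNorm_anticommutator_of_anticommute Z_mul_X,
      opNorm_anticommutator_of_anticommute Z_mul_Y, opNorm_mul_self_add_mul_self Z_mul_Z]

end PauliSharp

open Parity PauliSharp in
/-- Sharpness of the parity bound for `B = X⊗Y⊗X + X⊗Y⊗Z + Z⊗Z⊗Z`. -/
theorem tripartite_parity_bound_sharp :
    opNorm (∑ i : Fin 3, kron (d := fun _ => 2) (fun r => a r i)) ^ 2 = 5 ∧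
    phi (d := fun _ => 2) a 0 1 = 0 ∧
    phi (d := fun _ => 2) a 0 2 = 0 ∧
    phi (d := fun _ => 2) a 1 2 = 2 ∧
    opNorm (∑ i : Fin 3, kron (d := fun _ => 2) (fun r => a r i)) ^ 2 =
      3 + ∑ i : Fin 3, ∑ j ∈ Finset.univ.filter (fun j => i < j),
        phi (d := fun _ => 2) a i j := by
  have hB : opNorm (∑ i : Fin 3, kron (d := fun _ => 2) (fun r => a r i)) ^ 2 = 5 := by
    rw [sum_kron_a, opNorm_kron₃_sum_sq]
  refine ⟨hB, phi_a_zero_one, phi_a_zero_two, phi_a_one_two, ?_⟩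
  rw [hB]
  simp only [Finset.sum_filter, Fin.sum_univ_three]
  norm_num [phi_a_zero_one, phi_a_zero_two, phi_a_one_two, Fin.lt_def, Fin.ext_iff]
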